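/- Every ReLU-activated encoder block is a cubic spline: if α : ℝ^{n×p} → ℝ^{mh×p} is an h-headed ReLU attention module and φ : ℝ^{mh×p} → ℝ^{n'×p} is a ReLU feed-forward neural network applied columnwise, then the encoder block ε = φ ∘ α : ℝ^{n×p} → ℝ^{n'×p} is a matrix-valued spline of degree 3. -/

import Mathlib

noncomputable section

open Matrix

/-- The rectified linear unit. -/
def relu (x : ℝ) : ℝ := max x 0

/-- Entrywise ReLU of a matrix. -/
def matRelu {a b : ℕ} (M : Matrix (Fin a) (Fin b) ℝ) : Matrix (Fin a) (Fin b) ℝ :=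
  Matrix.of fun i j => relu (M i j)

/-- A continuous function `f : ℝ^ι → ℝ` is a (polynomial) spline of degree `k` if there are
polynomials `π_1, …, π_b`, each of total degree at most `k`, such that on every (nonempty) cell
of the induced semialgebraic sign partition, `f` agrees with a polynomial of degree at most `k`. -/
def IsSpline (ι : Type) [Fintype ι] (k : ℕ) (f : (ι → ℝ) → ℝ) : Prop :=
  Continuous f ∧
  ∃ (b : ℕ) (π : Fin b → MvPolynomial ι ℝ),
    (∀ i, (π i).totalDegree ≤ k) ∧
    ∀ θ : Fin b → SignType,
      ∃ ξ : MvPolynomial ι ℝ, ξ.totalDegree ≤ k ∧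
        ∀ x : ι → ℝ, (∀ i, SignType.sign (MvPolynomial.eval x (π i)) = θ i) →
          f x = MvPolynomial.eval x ξ

/-- A matrix-variate, matrix-valued function is a spline of degree `k` if each coordinate
function, regarded as a function of the entries of the input matrix, is a spline of degree `k`. -/
def IsMatrixSpline {n p m q : ℕ} (k : ℕ)
    (f : Matrix (Fin n) (Fin p) ℝ → Matrix (Fin m) (Fin q) ℝ) : Prop :=
  ∀ (i : Fin m) (j : Fin q),
    IsSpline (Fin n × Fin p) k (fun x => f (Matrix.of fun a b => x (a, b)) i j)

/-- The ReLU-activated attention module `α(X) = (A_V X + B_V) · ReLU((A_K X + B_K)ᵀ (A_Q X + B_Q))`. -/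
def attention {n p d m : ℕ}
    (AQ AK : Matrix (Fin d) (Fin n) ℝ) (AV : Matrix (Fin m) (Fin n) ℝ)
    (BQ BK : Matrix (Fin d) (Fin p) ℝ) (BV : Matrix (Fin m) (Fin p) ℝ)
    (X : Matrix (Fin n) (Fin p) ℝ) : Matrix (Fin m) (Fin p) ℝ :=
  (AV * X + BV) * matRelu ((AK * X + BK)ᵀ * (AQ * X + BQ))

/-- An `h`-headed ReLU attention module: `h` attention modules stacked vertically, giving a map
`ℝ^{n×p} → ℝ^{hm×p}`. -/
def multiheadAttention {n p d m h : ℕ}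
    (AQ AK : Fin h → Matrix (Fin d) (Fin n) ℝ) (AV : Fin h → Matrix (Fin m) (Fin n) ℝ)
    (BQ BK : Fin h → Matrix (Fin d) (Fin p) ℝ) (BV : Fin h → Matrix (Fin m) (Fin p) ℝ)
    (X : Matrix (Fin n) (Fin p) ℝ) : Matrix (Fin (h * m)) (Fin p) ℝ :=
  Matrix.of fun i j =>
    attention (AQ (finProdFinEquiv.symm i).1) (AK (finProdFinEquiv.symm i).1)
      (AV (finProdFinEquiv.symm i).1) (BQ (finProdFinEquiv.symm i).1)
      (BK (finProdFinEquiv.symm i).1) (BV (finProdFinEquiv.symm i).1) X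
      (finProdFinEquiv.symm i).2 j

/-- ReLU feed-forward neural networks `φ(x) = A_{l+1} σ_l A_l ⋯ σ_1 A_1 x + b_{l+1}`, where
`σ_i(x) = ReLU(x + b_i)` coordinatewise: the base case is an affine map, and each additional
layer precomposes with `x ↦ ReLU(A x + b)`. -/
inductive IsNN : ∀ {a b : ℕ}, ((Fin a → ℝ) → (Fin b → ℝ)) → Prop
  | affine {a b : ℕ} (A : Matrix (Fin b) (Fin a) ℝ) (c : Fin b → ℝ) :
      IsNN (fun x => A.mulVec x + c)
  | layer {a b c : ℕ} (A : Matrix (Fin b) (Fin a) ℝ) (v : Fin b → ℝ)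
      {g : (Fin b → ℝ) → (Fin c → ℝ)} (hg : IsNN g) :
      IsNN (fun x => g (fun i => relu (A.mulVec x i + v i)))

/-- Apply a map `φ : ℝ^a → ℝ^c` columnwise to a matrix `X ∈ ℝ^{a×p}`. -/
def colwise {a c p : ℕ} (φ : (Fin a → ℝ) → (Fin c → ℝ))
    (X : Matrix (Fin a) (Fin p) ℝ) : Matrix (Fin c) (Fin p) ℝ :=
  Matrix.of fun i j => φ (fun r => X r j) i

/-!
Splines of degree at most `k` on `ℝ^ι` are closed under sums, under ReLU, and under products,
where degrees add. ReLU is the interesting case: on a cell where `f` agrees with a polynomial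
`ξ`, adding `ξ` to the partition polynomials splits the cell into pieces on which `relu ∘ f` is
`ξ` or `0`. An entry of `A X + B` is a linear polynomial in the entries of `X`, so an entry of an
attention module, `(A_V X + B_V) · ReLU((A_K X + B_K)ᵀ (A_Q X + B_Q))`, is a spline of degree
`1 + 2 = 3`; a ReLU network only takes affine combinations and ReLUs, so it does not raise degrees.
-/

variable {ι : Type} [Fintype ι] {k k₁ k₂ : ℕ} {f g : (ι → ℝ) → ℝ}

theorem isSpline_of_fintype {J : Type} [Fintype J] (hf : Continuous f)
    (π : J → MvPolynomial ι ℝ) (hπ : ∀ j, (π j).totalDegree ≤ k)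
    (hcell : ∀ θ : J → SignType, ∃ ξ : MvPolynomial ι ℝ, ξ.totalDegree ≤ k ∧
      ∀ x : ι → ℝ, (∀ j, SignType.sign (MvPolynomial.eval x (π j)) = θ j) →
        f x = MvPolynomial.eval x ξ) :
    IsSpline ι k f := by
  let e := Fintype.equivFin J
  refine ⟨hf, Fintype.card J, π ∘ e.symm, fun i => hπ _, fun θ => ?_⟩
  obtain ⟨ξ, hξ, hfξ⟩ := hcell (θ ∘ e)
  exact ⟨ξ, hξ, fun x hx => hfξ x fun j => by simpa using hx (e j)⟩

theorem isSpline_eval (ξ : MvPolynomial ι ℝ) (hξ : ξ.totalDegree ≤ k) :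
    IsSpline ι k fun x => MvPolynomial.eval x ξ :=
  isSpline_of_fintype ξ.continuous_eval (J := Empty) Empty.elim Empty.rec
    fun _ => ⟨ξ, hξ, fun _ _ => rfl⟩

theorem isSpline_const (c : ℝ) : IsSpline ι k fun _ => c := by
  simpa using isSpline_eval (k := k) (MvPolynomial.C c) (by simp)

theorem isSpline_apply (v : ι) : IsSpline ι 1 fun x => x v := by
  simpa using isSpline_eval (MvPolynomial.X v) (MvPolynomial.totalDegree_X v).le

theorem IsSpline.add (hf : IsSpline ι k f) (hg : IsSpline ι k g) :
    IsSpline ι k fun x => f x + g x := by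
  obtain ⟨hcf, b₁, π₁, hπ₁, hf⟩ := hf
  obtain ⟨hcg, b₂, π₂, hπ₂, hg⟩ := hg
  refine isSpline_of_fintype (hcf.add hcg) (Sum.elim π₁ π₂) (by rintro (j | j) <;> simp [hπ₁, hπ₂])
    fun θ => ?_
  obtain ⟨ξ₁, hξ₁, hfξ₁⟩ := hf (θ ∘ Sum.inl)
  obtain ⟨ξ₂, hξ₂, hgξ₂⟩ := hg (θ ∘ Sum.inr)
  refine ⟨ξ₁ + ξ₂, (MvPolynomial.totalDegree_add _ _).trans (max_le hξ₁ hξ₂), fun x hx => ?_⟩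
  rw [MvPolynomial.eval_add, hfξ₁ x fun j => hx (.inl j), hgξ₂ x fun j => hx (.inr j)]

theorem IsSpline.mul (hf : IsSpline ι k₁ f) (hg : IsSpline ι k₂ g) :
    IsSpline ι (k₁ + k₂) fun x => f x * g x := by
  obtain ⟨hcf, b₁, π₁, hπ₁, hf⟩ := hf
  obtain ⟨hcg, b₂, π₂, hπ₂, hg⟩ := hg
  refine isSpline_of_fintype (hcf.mul hcg) (Sum.elim π₁ π₂)
    (by rintro (j | j)
        exacts [le_add_right (hπ₁ j), le_add_left (hπ₂ j)])
    fun θ => ?_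
  obtain ⟨ξ₁, hξ₁, hfξ₁⟩ := hf (θ ∘ Sum.inl)
  obtain ⟨ξ₂, hξ₂, hgξ₂⟩ := hg (θ ∘ Sum.inr)
  refine ⟨ξ₁ * ξ₂, (MvPolynomial.totalDegree_mul _ _).trans (add_le_add hξ₁ hξ₂), fun x hx => ?_⟩
  rw [MvPolynomial.eval_mul, hfξ₁ x fun j => hx (.inl j), hgξ₂ x fun j => hx (.inr j)]

theorem IsSpline.const_mul (c : ℝ) (hf : IsSpline ι k f) : IsSpline ι k fun x => c * f x := by
  simpa using (isSpline_const (k := 0) c).mul hf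

theorem isSpline_sum {γ : Type*} (s : Finset γ) {F : γ → (ι → ℝ) → ℝ}
    (hF : ∀ i ∈ s, IsSpline ι k (F i)) : IsSpline ι k fun x => ∑ i ∈ s, F i x := by
  classical
  induction s using Finset.induction with
  | empty => simpa using isSpline_const 0
  | insert a s ha ih =>
    simp only [Finset.sum_insert ha]
    exact (hF a (s.mem_insert_self a)).add (ih fun i hi => hF i (Finset.mem_insert_of_mem hi))

theorem continuous_relu : Continuous relu := continuous_id.max continuous_const

theorem relu_eq_ite_sign (y : ℝ) : relu y = if SignType.sign y = 1 then y else 0 := by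
  split_ifs with hy <;> rw [sign_eq_one_iff] at hy
  · exact max_eq_left hy.le
  · exact max_eq_right (not_lt.mp hy)

theorem IsSpline.relu (hf : IsSpline ι k f) : IsSpline ι k fun x => relu (f x) := by
  obtain ⟨hcf, b, π, hπ, hf⟩ := hf
  choose ξ hξ hfξ using hf
  refine isSpline_of_fintype (continuous_relu.comp hcf) (Sum.elim π ξ)
    (by rintro (j | t) <;> simp [hπ, hξ]) fun θ => ?_
  let t := θ ∘ Sum.inl
  refine ⟨if θ (.inr t) = 1 then ξ t else 0, by split_ifs <;> simp [hξ], fun x hx => ?_⟩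
  have hsign : SignType.sign (MvPolynomial.eval x (ξ t)) = θ (.inr t) := hx (.inr t)
  rw [hfξ t x fun j => hx (.inl j), relu_eq_ite_sign, hsign]
  split_ifs <;> simp

theorem isSpline_mulVec_apply {a c : ℕ} (A : Matrix (Fin c) (Fin a) ℝ) {v : (ι → ℝ) → Fin a → ℝ}
    (hv : ∀ r, IsSpline ι k fun x => v x r) (i : Fin c) :
    IsSpline ι k fun x => (A *ᵥ v x) i :=
  isSpline_sum Finset.univ fun r _ => (hv r).const_mul (A i r)

theorem IsNN.isSpline_comp {a c : ℕ} {φ : (Fin a → ℝ) → (Fin c → ℝ)} (hφ : IsNN φ)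
    {v : (ι → ℝ) → Fin a → ℝ} (hv : ∀ r, IsSpline ι k fun x => v x r) (i : Fin c) :
    IsSpline ι k fun x => φ (v x) i := by
  induction hφ with
  | affine A c => exact (isSpline_mulVec_apply A hv i).add (isSpline_const _)
  | layer A w _ ih =>
    exact ih (fun r => ((isSpline_mulVec_apply A hv r).add (isSpline_const (w r))).relu) i

section Matrix

variable {l o q : Type*} [Fintype o]

theorem isSpline_mul_apply {M : (ι → ℝ) → Matrix l o ℝ} {N : (ι → ℝ) → Matrix o q ℝ}
    (hM : ∀ i j, IsSpline ι k₁ fun x => M x i j) (hN : ∀ i j, IsSpline ι k₂ fun x => N x i j)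
    (i : l) (j : q) : IsSpline ι (k₁ + k₂) fun x => (M x * N x) i j :=
  isSpline_sum Finset.univ fun r _ => (hM i r).mul (hN r j)

theorem isSpline_matRelu_apply {a b : ℕ} {M : (ι → ℝ) → Matrix (Fin a) (Fin b) ℝ}
    (hM : ∀ i j, IsSpline ι k fun x => M x i j) (i : Fin a) (j : Fin b) :
    IsSpline ι k fun x => matRelu (M x) i j :=
  (hM i j).relu

end Matrix

variable {n p : ℕ}

theorem isSpline_affine_apply {l : Type*} (A : Matrix l (Fin n) ℝ) (B : Matrix l (Fin p) ℝ)
    (i : l) (j : Fin p) :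
    IsSpline (Fin n × Fin p) 1 fun x => (A * Matrix.of (fun a b => x (a, b)) + B) i j :=
  (isSpline_mul_apply (M := fun _ => A) (k₁ := 0) (fun _ _ => isSpline_const _)
    (N := fun x => Matrix.of fun a b => x (a, b)) (fun a b => isSpline_apply (a, b)) i j).add
    (isSpline_const _)

theorem isSpline_attention_apply {d m : ℕ}
    (AQ AK : Matrix (Fin d) (Fin n) ℝ) (AV : Matrix (Fin m) (Fin n) ℝ)
    (BQ BK : Matrix (Fin d) (Fin p) ℝ) (BV : Matrix (Fin m) (Fin p) ℝ) (i : Fin m) (j : Fin p) :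
    IsSpline (Fin n × Fin p) 3
      fun x => attention AQ AK AV BQ BK BV (Matrix.of fun a b => x (a, b)) i j :=
  isSpline_mul_apply (isSpline_affine_apply AV BV)
    (isSpline_matRelu_apply (isSpline_mul_apply (fun i j => isSpline_affine_apply AK BK j i)
      (isSpline_affine_apply AQ BQ))) i j

/-- Every ReLU-activated encoder block — a multihead ReLU attention module followed by a ReLU
feed-forward neural network applied columnwise — is a cubic spline. -/
theorem encoder_block_is_cubic_spline (n p d m h n' : ℕ)
    (AQ AK : Fin h → Matrix (Fin d) (Fin n) ℝ) (AV : Fin h → Matrix (Fin m) (Fin n) ℝ)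
    (BQ BK : Fin h → Matrix (Fin d) (Fin p) ℝ) (BV : Fin h → Matrix (Fin m) (Fin p) ℝ)
    (φ : (Fin (h * m) → ℝ) → (Fin n' → ℝ)) (hφ : IsNN φ) :
    IsMatrixSpline 3 (fun X => colwise φ (multiheadAttention AQ AK AV BQ BK BV X)) :=
  fun i j => hφ.isSpline_comp (fun _ => isSpline_attention_apply _ _ _ _ _ _ _ j) i
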